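/- arXiv:2012.00077 — 2 statements merged into one kernel-verified Lean document; each statement's English description precedes it below -/
import Mathlib

section
/- If γ > D*, then the rectangle [0, E1(γ)] × [0, E2(γ)] is contained in the fixed-length region R_FL, and consequently R_γ = R_FL. -/
open Real Finset
open scoped Classical

noncomputable section

variable {X : Type} [Fintype X]

/-- `p` is a probability mass function on the finite alphabet `X`. -/
def IsPMF (p : X → ℝ) : Prop := (∀ x, 0 ≤ p x) ∧ ∑ x, p x = 1

/-- Kullback–Leibler divergence (natural logarithms) between distributions on a finite
alphabet, with the convention `0 · log(0/·) = 0`. -/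
def klDiv (p q : X → ℝ) : ℝ := ∑ x, p x * Real.log (p x / q x)

/-- The `λ`-tilted distribution between `P1` and `P2`. -/
def tilted (P1 P2 : X → ℝ) (lam : ℝ) (x : X) : ℝ :=
  P1 x ^ (1 - lam) * P2 x ^ lam / ∑ a, P1 a ^ (1 - lam) * P2 a ^ lam

/-- The fixed-length error-exponent region
`R_FL = {(E1,E2) : ∃ λ ∈ [0,1], E1 ≤ D(P^(λ)‖P1) ∧ E2 ≤ D(P^(λ)‖P2)}`. -/
def RFL (P1 P2 : X → ℝ) : Set (ℝ × ℝ) :=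
  { E | ∃ lam ∈ Set.Icc (0:ℝ) 1,
      E.1 ≤ klDiv (tilted P1 P2 lam) P1 ∧ E.2 ≤ klDiv (tilted P1 P2 lam) P2 }

/-- `E1(γ) = max { D(P^(λ)‖P1) : λ ∈ [0,1], D(P^(λ)‖P2) ≥ γ }`. -/
def E1exp (P1 P2 : X → ℝ) (γ : ℝ) : ℝ :=
  sSup { e | ∃ lam ∈ Set.Icc (0:ℝ) 1,
      γ ≤ klDiv (tilted P1 P2 lam) P2 ∧ e = klDiv (tilted P1 P2 lam) P1 }

/-- `E2(γ) = max { D(P^(λ)‖P2) : λ ∈ [0,1], D(P^(λ)‖P1) ≥ γ }`. -/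
def E2exp (P1 P2 : X → ℝ) (γ : ℝ) : ℝ :=
  sSup { e | ∃ lam ∈ Set.Icc (0:ℝ) 1,
      γ ≤ klDiv (tilted P1 P2 lam) P1 ∧ e = klDiv (tilted P1 P2 lam) P2 }

/-- `R_γ = R_FL ∪ ([0,E1(γ)] × [0,E2(γ)])`. -/
def Rgamma (P1 P2 : X → ℝ) (γ : ℝ) : Set (ℝ × ℝ) :=
  RFL P1 P2 ∪ (Set.Icc 0 (E1exp P1 P2 γ) ×ˢ Set.Icc 0 (E2exp P1 P2 γ))

/-- `K·S = {K·x : x ∈ S}` for `S ⊆ ℝ²`. -/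
def scaleSet (K : ℕ) (S : Set (ℝ × ℝ)) : Set (ℝ × ℝ) :=
  (fun p : ℝ × ℝ => ((K : ℝ) * p.1, (K : ℝ) * p.2)) '' S

/-- Probability of the i.i.d. sample sequence `x` under the distribution `P`. -/
def prodProb (P : X → ℝ) {N : ℕ} (x : Fin N → X) : ℝ := ∏ i, P (x i)

/-- The first `n` samples, as a list. -/
def histX {N : ℕ} (x : Fin N → X) (n : ℕ) : List X := (List.ofFn x).take n

/-- A sequential binary hypothesis test whose stopping time is almost surely bounded
by `N`: a stopping time `τ` with respect to the filtration `σ(X_1,…,X_n)` together with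
a decision (`accept1 = true` means "choose `H1`") taken at the stopping time; the
decision regions are `A1^τ = {accept1}` and `A2^τ = {¬ accept1}`. -/
structure SeqTest (X : Type) [Fintype X] (N : ℕ) where
  τ : (Fin N → X) → ℕ
  τ_le : ∀ x, τ x ≤ N
  τ_stopping : ∀ x x', histX x' (τ x) = histX x (τ x) → τ x' = τ x
  accept1 : List X → Bool

/-- Type-I error probability `P1(A2^τ)`. -/
def errProb1 (P1 : X → ℝ) {N : ℕ} (T : SeqTest X N) : ℝ :=
  ∑ x : Fin N → X, prodProb P1 x *
    (if T.accept1 (histX x (T.τ x)) = false then 1 else 0)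

/-- Type-II error probability `P2(A1^τ)`. -/
def errProb2 (P2 : X → ℝ) {N : ℕ} (T : SeqTest X N) : ℝ :=
  ∑ x : Fin N → X, prodProb P2 x *
    (if T.accept1 (histX x (T.τ x)) = true then 1 else 0)

/-- Probability `P(τ > n)` under sampling distribution `P`. -/
def lateProbHT (P : X → ℝ) {N : ℕ} (T : SeqTest X N) (n : ℕ) : ℝ :=
  ∑ x : Fin N → X, prodProb P x * (if n < T.τ x then 1 else 0)

/-- `(E1,E2)` is achievable in a `(γ,K)`-almost-fixed-length manner: for every `δ > 0`
and all large `n` there is a test with `P_i(τ > n) ≤ e^{−γn}`, `τ ≤ Kn` a.s. (encoded in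
the type of the test), `P1(A2^τ) ≤ e^{−(E1−δ)n}` and `P2(A1^τ) ≤ e^{−(E2−δ)n}`. -/
def AFLAchievable (P1 P2 : X → ℝ) (γ : ℝ) (K : ℕ) (E : ℝ × ℝ) : Prop :=
  ∀ δ > 0, ∃ N0 : ℕ, ∀ n : ℕ, n ≥ N0 → ∃ T : SeqTest X (K * n),
    lateProbHT P1 T n ≤ Real.exp (-(γ * n)) ∧
    lateProbHT P2 T n ≤ Real.exp (-(γ * n)) ∧
    errProb1 P1 T ≤ Real.exp (-((E.1 - δ) * n)) ∧
    errProb2 P2 T ≤ Real.exp (-((E.2 - δ) * n))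

/-- `R_AFL^(γ,K)`: the region of error-exponent pairs achievable in a
`(γ,K)`-almost-fixed-length manner. -/
def RAFL (P1 P2 : X → ℝ) (γ : ℝ) (K : ℕ) : Set (ℝ × ℝ) :=
  { E | AFLAchievable P1 P2 γ K E }

private lemma Zpos {X : Type} [Fintype X] [Nonempty X] (P1 P2 : X → ℝ)
    (hs1 : ∀ x, 0 < P1 x) (hs2 : ∀ x, 0 < P2 x) (lam : ℝ) :
    0 < ∑ a, P1 a ^ (1 - lam) * P2 a ^ lam :=
  Finset.sum_pos (fun a _ => mul_pos (Real.rpow_pos_of_pos (hs1 a) _)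
    (Real.rpow_pos_of_pos (hs2 a) _)) Finset.univ_nonempty

private lemma tilted_pos {X : Type} [Fintype X] [Nonempty X] (P1 P2 : X → ℝ)
    (hs1 : ∀ x, 0 < P1 x) (hs2 : ∀ x, 0 < P2 x) (lam : ℝ) (x : X) :
    0 < tilted P1 P2 lam x :=
  div_pos (mul_pos (Real.rpow_pos_of_pos (hs1 x) _) (Real.rpow_pos_of_pos (hs2 x) _))
    (Zpos P1 P2 hs1 hs2 lam)

private lemma tilted_sum_one {X : Type} [Fintype X] [Nonempty X] (P1 P2 : X → ℝ)
    (hs1 : ∀ x, 0 < P1 x) (hs2 : ∀ x, 0 < P2 x) (lam : ℝ) :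
    ∑ x, tilted P1 P2 lam x = 1 := by
  unfold tilted
  rw [← Finset.sum_div]
  exact div_self (ne_of_gt (Zpos P1 P2 hs1 hs2 lam))

private lemma klDiv_nonneg' {X : Type} [Fintype X] (p q : X → ℝ)
    (hp : ∀ x, 0 < p x) (hq : ∀ x, 0 < q x)
    (hps : ∑ x, p x = 1) (hqs : ∑ x, q x = 1) :
    0 ≤ klDiv p q := by
  have h : ∀ x : X, p x - q x ≤ p x * Real.log (p x / q x) := by
    intro x
    have hlog : Real.log (q x / p x) ≤ q x / p x - 1 :=
      Real.log_le_sub_one_of_pos (div_pos (hq x) (hp x))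
    have hinv : Real.log (p x / q x) = - Real.log (q x / p x) := by
      rw [← Real.log_inv]; congr 1; field_simp
    rw [hinv]
    have h2 := mul_le_mul_of_nonneg_left hlog (hp x).le
    have hpx := hp x
    have h3 : p x * (q x / p x - 1) = q x - p x := by field_simp
    nlinarith [h2, h3]
  calc (0:ℝ) = ∑ x, (p x - q x) := by rw [Finset.sum_sub_distrib, hps, hqs]; ring
  _ ≤ ∑ x, p x * Real.log (p x / q x) := Finset.sum_le_sum (fun x _ => h x)
  _ = klDiv p q := rfl

private lemma klDiv_self' {X : Type} [Fintype X] (p : X → ℝ) (hp : ∀ x, 0 < p x) :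
    klDiv p p = 0 := by
  unfold klDiv
  apply Finset.sum_eq_zero
  intro x _
  rw [div_self (ne_of_gt (hp x)), Real.log_one, mul_zero]

private lemma tilted_log {X : Type} [Fintype X] [Nonempty X] (P1 P2 : X → ℝ)
    (hs1 : ∀ x, 0 < P1 x) (hs2 : ∀ x, 0 < P2 x) (lam : ℝ) (x : X) :
    Real.log (tilted P1 P2 lam x)
      = (1 - lam) * Real.log (P1 x) + lam * Real.log (P2 x)
        - Real.log (∑ a, P1 a ^ (1 - lam) * P2 a ^ lam) := by
  unfold tilted
  rw [Real.log_div (ne_of_gt (mul_pos (Real.rpow_pos_of_pos (hs1 x) _)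
        (Real.rpow_pos_of_pos (hs2 x) _))) (ne_of_gt (Zpos P1 P2 hs1 hs2 lam)),
      Real.log_mul (ne_of_gt (Real.rpow_pos_of_pos (hs1 x) _))
        (ne_of_gt (Real.rpow_pos_of_pos (hs2 x) _)),
      Real.log_rpow (hs1 x), Real.log_rpow (hs2 x)]

/-- The key identity: `(1-μ) D(P^λ‖P1) + μ D(P^λ‖P2) = D(P^λ‖P^μ) - log Z(μ)`. -/
private lemma key_identity {X : Type} [Fintype X] [Nonempty X] (P1 P2 : X → ℝ)
    (hs1 : ∀ x, 0 < P1 x) (hs2 : ∀ x, 0 < P2 x) (lam mu : ℝ) :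
    (1 - mu) * klDiv (tilted P1 P2 lam) P1 + mu * klDiv (tilted P1 P2 lam) P2
      = klDiv (tilted P1 P2 lam) (tilted P1 P2 mu)
        - Real.log (∑ a, P1 a ^ (1 - mu) * P2 a ^ mu) := by
  set t := tilted P1 P2 lam with ht
  set Zl := Real.log (∑ a, P1 a ^ (1 - lam) * P2 a ^ lam) with hZl
  set Zm := Real.log (∑ a, P1 a ^ (1 - mu) * P2 a ^ mu) with hZm
  set S := ∑ x, t x * (Real.log (P2 x) - Real.log (P1 x)) with hS
  have htpos : ∀ x, 0 < t x := tilted_pos P1 P2 hs1 hs2 lam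
  have hts : ∑ x, t x = 1 := tilted_sum_one P1 P2 hs1 hs2 lam
  have hgen : ∀ (c d : ℝ) (q : X → ℝ),
      (∀ x, Real.log (t x / q x) = c * (Real.log (P2 x) - Real.log (P1 x)) + d) →
      klDiv t q = c * S + d := by
    intro c d q hx
    unfold klDiv
    calc ∑ x, t x * Real.log (t x / q x)
        = ∑ x, (c * (t x * (Real.log (P2 x) - Real.log (P1 x))) + d * t x) := by
          refine Finset.sum_congr rfl (fun x _ => ?_)
          rw [hx x]; ring
      _ = c * S + d * (∑ x, t x) := by
          rw [Finset.sum_add_distrib, ← Finset.mul_sum, ← Finset.mul_sum, hS]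
      _ = c * S + d := by rw [hts, mul_one]
  have h1 : klDiv t P1 = lam * S + (- Zl) := by
    apply hgen
    intro x
    rw [Real.log_div (ne_of_gt (htpos x)) (ne_of_gt (hs1 x)),
        ht, tilted_log P1 P2 hs1 hs2 lam x]
    ring
  have h2 : klDiv t P2 = (lam - 1) * S + (- Zl) := by
    apply hgen
    intro x
    rw [Real.log_div (ne_of_gt (htpos x)) (ne_of_gt (hs2 x)),
        ht, tilted_log P1 P2 hs1 hs2 lam x]
    ring
  have h3 : klDiv t (tilted P1 P2 mu) = (lam - mu) * S + (Zm - Zl) := by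
    apply hgen
    intro x
    rw [Real.log_div (ne_of_gt (htpos x)) (ne_of_gt (tilted_pos P1 P2 hs1 hs2 mu x)),
        ht, tilted_log P1 P2 hs1 hs2 lam x, tilted_log P1 P2 hs1 hs2 mu x]
    ring
  rw [h1, h2, h3]
  ring

/-- If `γ > D*` then `[0,E1(γ)] × [0,E2(γ)] ⊆ R_FL`, and consequently
`R_γ = R_FL`. -/
theorem rectangle_in_RFL_of_gamma_gt_chernoff
    {X : Type} [Fintype X]
    (P1 P2 : X → ℝ) (h1 : IsPMF P1) (h2 : IsPMF P2) (hne : P1 ≠ P2)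
    (hs1 : ∀ x, 0 < P1 x) (hs2 : ∀ x, 0 < P2 x)
    (lamstar : ℝ) (hlam : lamstar ∈ Set.Icc (0:ℝ) 1)
    (hstar : klDiv (tilted P1 P2 lamstar) P1 = klDiv (tilted P1 P2 lamstar) P2)
    (γ : ℝ) (hγ : klDiv (tilted P1 P2 lamstar) P1 < γ) :
    (Set.Icc 0 (E1exp P1 P2 γ) ×ˢ Set.Icc 0 (E2exp P1 P2 γ)) ⊆ RFL P1 P2 ∧
    Rgamma P1 P2 γ = RFL P1 P2 := by
  haveI : Nonempty X := by
    rcases isEmpty_or_nonempty X with h | h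
    · exfalso; have := h1.2; simp at this
    · exact h
  set Dstar := klDiv (tilted P1 P2 lamstar) P1 with hD
  -- D* is nonnegative
  have hDnn : 0 ≤ Dstar :=
    klDiv_nonneg' _ _ (tilted_pos P1 P2 hs1 hs2 lamstar) hs1
      (tilted_sum_one P1 P2 hs1 hs2 lamstar) h1.2
  -- For any λ, (1-λ) D1(λ) + λ D2(λ) ≤ D*
  have hA : ∀ lam : ℝ,
      (1 - lam) * klDiv (tilted P1 P2 lam) P1 + lam * klDiv (tilted P1 P2 lam) P2
        ≤ Dstar := by
    intro lam
    have e1 := key_identity P1 P2 hs1 hs2 lam lam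
    have e2 := key_identity P1 P2 hs1 hs2 lamstar lam
    rw [klDiv_self' _ (tilted_pos P1 P2 hs1 hs2 lam)] at e1
    have hkl : 0 ≤ klDiv (tilted P1 P2 lamstar) (tilted P1 P2 lam) :=
      klDiv_nonneg' _ _ (tilted_pos P1 P2 hs1 hs2 lamstar) (tilted_pos P1 P2 hs1 hs2 lam)
        (tilted_sum_one P1 P2 hs1 hs2 lamstar) (tilted_sum_one P1 P2 hs1 hs2 lam)
    rw [← hD, ← hstar] at e2
    -- e2 : (1-lam) * Dstar + lam * Dstar = klDiv ... - log Z(lam)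
    nlinarith [e1, e2, hkl]
  have hE1 : E1exp P1 P2 γ ≤ Dstar := by
    apply Real.sSup_le _ hDnn
    rintro e ⟨lam, ⟨hl0, hl1⟩, hge, rfl⟩
    have hAl := hA lam
    rcases eq_or_lt_of_le hl1 with h | h
    · subst h; linarith
    · by_contra hc
      push_neg at hc
      have hp1 : 0 < 1 - lam := by linarith
      nlinarith [mul_pos hp1 (sub_pos.2 hc), mul_nonneg hl0 (sub_nonneg.2 hγ.le),
        mul_le_mul_of_nonneg_left hge hl0]
  have hE2 : E2exp P1 P2 γ ≤ Dstar := by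
    apply Real.sSup_le _ hDnn
    rintro e ⟨lam, ⟨hl0, hl1⟩, hge, rfl⟩
    have hAl := hA lam
    have hl1' : 0 ≤ 1 - lam := by linarith
    rcases eq_or_lt_of_le hl0 with h | h
    · rw [← h] at hAl hge; linarith
    · by_contra hc
      push_neg at hc
      nlinarith [mul_pos h (sub_pos.2 hc), mul_nonneg hl1' (sub_nonneg.2 hγ.le),
        mul_le_mul_of_nonneg_left hge hl1']
  have hsub : (Set.Icc 0 (E1exp P1 P2 γ) ×ˢ Set.Icc 0 (E2exp P1 P2 γ)) ⊆ RFL P1 P2 := by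
    rintro ⟨E1, E2⟩ ⟨⟨_, hE1b⟩, ⟨_, hE2b⟩⟩
    exact ⟨lamstar, hlam, hE1b.trans hE1, (hE2b.trans hE2).trans_eq hstar⟩
  exact ⟨hsub, Set.union_eq_left.mpr hsub⟩

end
end

section
/- For γ ≤ D*, the Phase-I stopping event of the two-phase hypothesis test has exponentially small probability with exponent γ under both hypotheses: for every δ > 0 there is N(δ) such that for all n ≥ N(δ) and for i = 1,2, P_i( β1 < (1/n)·Σ_{j=1}^n log(P1(X_j)/P2(X_j)) < α1 ) ≤ e^{−(γ−δ)n}, where the X_j are i.i.d. with law P_i under hypothesis H_i; consequently the stopping time τ of the two-phase test satisfies P_i(τ > n) ≤ e^{−(γ−δ)n}. -/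
open Real Finset
open scoped Classical

noncomputable section

variable {X : Type} [Fintype X]

/-- Log-likelihood ratio `Σ_j log(P1(x_j)/P2(x_j))` of an observed sample list. -/
def llr (P1 P2 : X → ℝ) (l : List X) : ℝ :=
  (l.map fun a => Real.log (P1 a / P2 a)).sum

/-- The two-phase hypothesis test with Phase-I thresholds `α1, β1` and Phase-II
threshold `α`: Phase I collects `n` samples and stops, declaring `H1` if the
log-likelihood ratio is `≥ α1·n` and `H2` if it is `≤ β1·n`; otherwise Phase II
collects `(K−1)n` additional samples and declares `H1` iff the overall log-likelihood
ratio is `≥ α·(Kn)`. -/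
def twoPhaseTest (P1 P2 : X → ℝ) (α1 β1 α : ℝ) (K n : ℕ) (hK : 1 ≤ K) :
    SeqTest X (K * n) where
  τ := fun x =>
    if α1 * n ≤ llr P1 P2 (histX x n) ∨ llr P1 P2 (histX x n) ≤ β1 * n
    then n else K * n
  τ_le := by
    intro x
    try dsimp only
    split
    · exact Nat.le_mul_of_pos_left n (by omega)
    · exact le_rfl
  τ_stopping := by
    intro x x' h
    try dsimp only at h ⊢
    by_cases hc : α1 * n ≤ llr P1 P2 (histX x n) ∨ llr P1 P2 (histX x n) ≤ β1 * n
    · rw [if_pos hc] at h ⊢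
      rw [h, if_pos hc]
    · rw [if_neg hc] at h ⊢
      have hx : x' = x := by
        have h1 : List.ofFn x' = List.ofFn x := by
          simpa [histX, List.take_of_length_le, List.length_ofFn] using h
        exact List.ofFn_injective h1
      rw [hx, if_neg hc]
  accept1 := fun l =>
    if l.length ≤ n then decide (α1 * n ≤ llr P1 P2 l)
    else decide (α * (K * n : ℕ) ≤ llr P1 P2 l)

/-! Both bounds are Chernoff bounds whose exponents are the tilting parameters. With
`r = log (P1 / P2)` and `Z(λ) = ∑ₐ P1(a)^(1-λ) P2(a)^λ`, the moment generating functions of `r`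
are `E_{P1}[e^{-λ r}] = E_{P2}[e^{(1-λ) r}] = Z(λ)`, while `D(P^(λ)‖P1) = -λ m(λ) - log Z(λ)` for
`m(λ) = E_{P^(λ)}[r] = D(P^(λ)‖P2) - D(P^(λ)‖P1)`. As `α1 = m(λ2)` and `β1 = m(λ1)`, Markov's
inequality for `e^{-λ2 · llr}` under `P1` and for `e^{(1-λ1) · llr}` under `P2` gives
`P1(llr ≤ α1 n) ≤ e^{-n D(P^(λ2)‖P1)} = e^{-γn}` and
`P2(llr ≥ β1 n) ≤ e^{-n D(P^(λ1)‖P2)} = e^{-γn}`, with no loss in the exponent. The event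
`τ > n` forces the first `n` samples into the continuation region, and the remaining samples
integrate out. -/

theorem chernoff_sum_prod_le {ι : Type*} [Fintype ι] [DecidableEq ι] (P f : X → ℝ)
    (hP0 : ∀ a, 0 ≤ P a) (hPsum : ∑ a, P a = 1) (S : Finset ι) (c u : ℝ)
    (E : (ι → X) → Prop) [DecidablePred E] (hE : ∀ x, E x → u ≤ c * ∑ i ∈ S, f (x i)) :
    ∑ x : ι → X, (∏ i, P (x i)) * (if E x then 1 else 0)
      ≤ exp (-u) * (∑ a, P a * exp (c * f a)) ^ S.card := by
  set w : ι → X → ℝ := fun i a => P a * exp (if i ∈ S then c * f a else 0)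
  have hw : ∀ x : ι → X, ∏ i, w i (x i) = (∏ i, P (x i)) * exp (c * ∑ i ∈ S, f (x i)) := by
    intro x
    rw [prod_mul_distrib, ← exp_sum, mul_sum, ← sum_filter, filter_mem_eq_inter, univ_inter]
  have hpoint : ∀ x : ι → X,
      (∏ i, P (x i)) * (if E x then 1 else 0) ≤ exp (-u) * ∏ i, w i (x i) := by
    intro x
    have hprod : 0 ≤ ∏ i, P (x i) := prod_nonneg fun i _ => hP0 (x i)
    rw [hw, mul_left_comm, ← exp_add]
    split_ifs with hx
    · rw [mul_one]
      exact le_mul_of_one_le_right hprod (one_le_exp (by linarith [hE x hx]))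
    · rw [mul_zero]
      positivity
  have hmarg : ∀ i, ∑ a, w i a = if i ∈ S then ∑ a, P a * exp (c * f a) else 1 := by
    intro i
    split_ifs with hi <;> simp [w, hi, hPsum]
  calc ∑ x : ι → X, (∏ i, P (x i)) * (if E x then 1 else 0)
      ≤ exp (-u) * ∑ x : ι → X, ∏ i, w i (x i) := by
        rw [mul_sum]
        exact sum_le_sum fun x _ => hpoint x
    _ = exp (-u) * (∑ a, P a * exp (c * f a)) ^ S.card := by
        rw [← Fintype.prod_sum, Fintype.prod_congr _ _ hmarg, prod_ite_mem, univ_inter,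
          prod_const]

section Tilted

variable {P1 P2 : X → ℝ}

theorem rpow_mul_rpow_eq_mul_exp_neg {p q : ℝ} (hp : 0 < p) (hq : 0 < q) (lam : ℝ) :
    p ^ (1 - lam) * q ^ lam = p * exp (-lam * log (p / q)) := by
  calc p ^ (1 - lam) * q ^ lam = exp (log p) * exp (-lam * (log p - log q)) := by
        rw [rpow_def_of_pos hp, rpow_def_of_pos hq, ← exp_add, ← exp_add]
        ring_nf
    _ = p * exp (-lam * log (p / q)) := by rw [exp_log hp, log_div hp.ne' hq.ne']

theorem rpow_mul_rpow_eq_mul_exp {p q : ℝ} (hp : 0 < p) (hq : 0 < q) (lam : ℝ) :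
    p ^ (1 - lam) * q ^ lam = q * exp ((1 - lam) * log (p / q)) := by
  calc p ^ (1 - lam) * q ^ lam = exp (log q) * exp ((1 - lam) * (log p - log q)) := by
        rw [rpow_def_of_pos hp, rpow_def_of_pos hq, ← exp_add, ← exp_add]
        ring_nf
    _ = q * exp ((1 - lam) * log (p / q)) := by rw [exp_log hq, log_div hp.ne' hq.ne']

theorem klDiv_sub_klDiv (p : X → ℝ) (hs1 : ∀ x, 0 < P1 x) (hs2 : ∀ x, 0 < P2 x) :
    klDiv p P2 - klDiv p P1 = ∑ x, p x * log (P1 x / P2 x) := by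
  rw [klDiv, klDiv, ← sum_sub_distrib]
  refine sum_congr rfl fun x _ => ?_
  rcases eq_or_ne (p x) 0 with hp | hp
  · simp [hp]
  · rw [← mul_sub, log_div hp (hs2 x).ne', log_div hp (hs1 x).ne',
      log_div (hs1 x).ne' (hs2 x).ne']
    ring

theorem sum_rpow_mul_rpow_pos [Nonempty X] (hs1 : ∀ x, 0 < P1 x) (hs2 : ∀ x, 0 < P2 x)
    (lam : ℝ) : 0 < ∑ a, P1 a ^ (1 - lam) * P2 a ^ lam :=
  sum_pos (fun a _ => mul_pos (rpow_pos_of_pos (hs1 a) _) (rpow_pos_of_pos (hs2 a) _))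
    univ_nonempty

theorem sum_tilted [Nonempty X] (hs1 : ∀ x, 0 < P1 x) (hs2 : ∀ x, 0 < P2 x) (lam : ℝ) :
    ∑ x, tilted P1 P2 lam x = 1 := by
  simp only [tilted, ← sum_div]
  exact div_self (sum_rpow_mul_rpow_pos hs1 hs2 lam).ne'

theorem klDiv_tilted_left [Nonempty X] (hs1 : ∀ x, 0 < P1 x) (hs2 : ∀ x, 0 < P2 x) (lam : ℝ) :
    klDiv (tilted P1 P2 lam) P1 =
      -lam * (klDiv (tilted P1 P2 lam) P2 - klDiv (tilted P1 P2 lam) P1)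
        - log (∑ a, P1 a ^ (1 - lam) * P2 a ^ lam) := by
  set Z := ∑ a, P1 a ^ (1 - lam) * P2 a ^ lam with hZdef
  have hZ : 0 < Z := sum_rpow_mul_rpow_pos hs1 hs2 lam
  have hlog : ∀ x, log (tilted P1 P2 lam x / P1 x) = -lam * log (P1 x / P2 x) - log Z := by
    intro x
    have hdiv : tilted P1 P2 lam x / P1 x = exp (-lam * log (P1 x / P2 x)) / Z := by
      rw [tilted, ← hZdef, rpow_mul_rpow_eq_mul_exp_neg (hs1 x) (hs2 x)]
      field_simp [(hs1 x).ne']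
    rw [hdiv, log_div (exp_pos _).ne' hZ.ne', log_exp]
  calc klDiv (tilted P1 P2 lam) P1
      = -lam * ∑ x, tilted P1 P2 lam x * log (P1 x / P2 x)
          - log Z * ∑ x, tilted P1 P2 lam x := by
        rw [klDiv, mul_sum, mul_sum, ← sum_sub_distrib]
        exact sum_congr rfl fun x _ => by rw [hlog]; ring
    _ = _ := by rw [klDiv_sub_klDiv _ hs1 hs2, sum_tilted hs1 hs2, mul_one]

end Tilted

theorem histX_eq_ofFn {α : Type} {N : ℕ} (x : Fin N → α) : histX x N = List.ofFn x :=
  List.take_of_length_le (List.length_ofFn).le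

theorem llr_histX {α : Type} (P1 P2 : α → ℝ) {N : ℕ} (x : Fin N → α) (n : ℕ) :
    llr P1 P2 (histX x n) = ∑ i : Fin N with i.val < n, log (P1 (x i) / P2 (x i)) := by
  rw [llr, histX, List.map_take, List.map_ofFn, List.sum_take_ofFn]
  rfl

section LLRDeviation

variable {P1 P2 : X → ℝ} [Nonempty X] {N n : ℕ} {lam : ℝ}

theorem sum_prodProb_ite_le_exp_neg_klDiv_left (hs1 : ∀ x, 0 < P1 x) (hs2 : ∀ x, 0 < P2 x)
    (h1 : IsPMF P1) (hlam : 0 ≤ lam) (hn : n ≤ N) (E : (Fin N → X) → Prop) [DecidablePred E]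
    (hE : ∀ x, E x → llr P1 P2 (histX x n)
      ≤ n * (klDiv (tilted P1 P2 lam) P2 - klDiv (tilted P1 P2 lam) P1)) :
    ∑ x : Fin N → X, prodProb P1 x * (if E x then 1 else 0)
      ≤ exp (-(n * klDiv (tilted P1 P2 lam) P1)) := by
  set m := klDiv (tilted P1 P2 lam) P2 - klDiv (tilted P1 P2 lam) P1 with hm
  have hmgf : ∑ a, P1 a * exp (-lam * log (P1 a / P2 a))
      = ∑ a, P1 a ^ (1 - lam) * P2 a ^ lam :=
    sum_congr rfl fun a _ => (rpow_mul_rpow_eq_mul_exp_neg (hs1 a) (hs2 a) lam).symm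
  have hcard : #{i : Fin N | i.val < n} = n := by rw [Fin.card_filter_val_lt, min_eq_right hn]
  refine (chernoff_sum_prod_le P1 (fun a => log (P1 a / P2 a)) h1.1 h1.2
    {i : Fin N | i.val < n} (-lam) (-lam * (n * m)) E fun x hx => ?_).trans_eq ?_
  · rw [← llr_histX]
    exact mul_le_mul_of_nonpos_left (hE x hx) (neg_nonpos.mpr hlam)
  · rw [hmgf, hcard, ← exp_log (sum_rpow_mul_rpow_pos hs1 hs2 lam), ← exp_nat_mul, ← exp_add,
      klDiv_tilted_left hs1 hs2 lam, hm]
    ring_nf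

theorem sum_prodProb_ite_le_exp_neg_klDiv_right (hs1 : ∀ x, 0 < P1 x) (hs2 : ∀ x, 0 < P2 x)
    (h2 : IsPMF P2) (hlam : lam ≤ 1) (hn : n ≤ N) (E : (Fin N → X) → Prop) [DecidablePred E]
    (hE : ∀ x, E x → n * (klDiv (tilted P1 P2 lam) P2 - klDiv (tilted P1 P2 lam) P1)
      ≤ llr P1 P2 (histX x n)) :
    ∑ x : Fin N → X, prodProb P2 x * (if E x then 1 else 0)
      ≤ exp (-(n * klDiv (tilted P1 P2 lam) P2)) := by
  set m := klDiv (tilted P1 P2 lam) P2 - klDiv (tilted P1 P2 lam) P1 with hm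
  have hmgf : ∑ a, P2 a * exp ((1 - lam) * log (P1 a / P2 a))
      = ∑ a, P1 a ^ (1 - lam) * P2 a ^ lam :=
    sum_congr rfl fun a _ => (rpow_mul_rpow_eq_mul_exp (hs1 a) (hs2 a) lam).symm
  have hcard : #{i : Fin N | i.val < n} = n := by rw [Fin.card_filter_val_lt, min_eq_right hn]
  have hD2 : klDiv (tilted P1 P2 lam) P2 = klDiv (tilted P1 P2 lam) P1 + m := by ring
  refine (chernoff_sum_prod_le P2 (fun a => log (P1 a / P2 a)) h2.1 h2.2
    {i : Fin N | i.val < n} (1 - lam) ((1 - lam) * (n * m)) E fun x hx => ?_).trans_eq ?_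
  · rw [← llr_histX]
    exact mul_le_mul_of_nonneg_left (hE x hx) (sub_nonneg.mpr hlam)
  · rw [hmgf, hcard, ← exp_log (sum_rpow_mul_rpow_pos hs1 hs2 lam), ← exp_nat_mul, ← exp_add,
      hD2, klDiv_tilted_left hs1 hs2 lam, hm]
    ring_nf

end LLRDeviation

theorem lateProbHT_twoPhaseTest_le {P P1 P2 : X → ℝ} (hP : ∀ a, 0 ≤ P a) (α1 β1 α : ℝ)
    (K n : ℕ) (hK : 1 ≤ K) :
    lateProbHT P (twoPhaseTest P1 P2 α1 β1 α K n hK) n ≤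
      ∑ x : Fin (K * n) → X, prodProb P x *
        (if β1 * n < llr P1 P2 (histX x n) ∧ llr P1 P2 (histX x n) < α1 * n then 1 else 0) := by
  refine sum_le_sum fun x _ => mul_le_mul_of_nonneg_left ?_ (prod_nonneg fun i _ => hP (x i))
  have hcont : n < (twoPhaseTest P1 P2 α1 β1 α K n hK).τ x →
      β1 * n < llr P1 P2 (histX x n) ∧ llr P1 P2 (histX x n) < α1 * n := by
    dsimp only [twoPhaseTest]
    split_ifs with hstop
    · exact fun h => absurd h (lt_irrefl n)
    · rw [not_or, not_le, not_le] at hstop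
      exact fun _ => ⟨hstop.2, hstop.1⟩
  by_cases hlate : n < (twoPhaseTest P1 P2 α1 β1 α K n hK).τ x
  · rw [if_pos hlate, if_pos (hcont hlate)]
  · rw [if_neg hlate]
    positivity

theorem two_phase_test_phase_one_exponent_general
    {X : Type} [Fintype X]
    (P1 P2 : X → ℝ) (h1 : IsPMF P1) (h2 : IsPMF P2)
    (hs1 : ∀ x, 0 < P1 x) (hs2 : ∀ x, 0 < P2 x)
    (γ : ℝ)
    (lam1 : ℝ) (hlam1 : lam1 ∈ Set.Icc (0:ℝ) 1)
    (hlam1feas : klDiv (tilted P1 P2 lam1) P2 = γ)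
    (lam2 : ℝ) (hlam2 : lam2 ∈ Set.Icc (0:ℝ) 1)
    (hlam2feas : klDiv (tilted P1 P2 lam2) P1 = γ)
    (K : ℕ) (hK : 1 ≤ K) (α : ℝ)
    (α1 β1 : ℝ)
    (hα1 : α1 = klDiv (tilted P1 P2 lam2) P2 - klDiv (tilted P1 P2 lam2) P1)
    (hβ1 : β1 = klDiv (tilted P1 P2 lam1) P2 - klDiv (tilted P1 P2 lam1) P1) :
    ∀ δ > 0, ∃ N : ℕ, ∀ n : ℕ, n ≥ N →
      (∀ P : X → ℝ, (P = P1 ∨ P = P2) →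
        (∑ x : Fin n → X, prodProb P x *
            (if β1 * n < llr P1 P2 (List.ofFn x) ∧ llr P1 P2 (List.ofFn x) < α1 * n
             then 1 else 0))
          ≤ Real.exp (-((γ - δ) * n))) ∧
      (∀ P : X → ℝ, (P = P1 ∨ P = P2) →
        lateProbHT P (twoPhaseTest P1 P2 α1 β1 α K n hK) n
          ≤ Real.exp (-((γ - δ) * n))) := by
  intro δ hδ
  refine ⟨0, fun n _ => ?_⟩
  have : Nonempty X := by
    by_contra hX
    simpa [not_nonempty_iff.mp hX] using h1.2
  have hslack : exp (-(n * γ)) ≤ exp (-((γ - δ) * n)) :=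
    exp_le_exp.mpr (by nlinarith [hδ, (n.cast_nonneg : (0 : ℝ) ≤ n)])
  have hphase1 : ∀ {N : ℕ}, n ≤ N → ∀ P, P = P1 ∨ P = P2 →
      ∑ x : Fin N → X, prodProb P x *
        (if β1 * n < llr P1 P2 (histX x n) ∧ llr P1 P2 (histX x n) < α1 * n then 1 else 0)
        ≤ exp (-((γ - δ) * n)) := by
    rintro N hn P (rfl | rfl)
    · refine (sum_prodProb_ite_le_exp_neg_klDiv_left hs1 hs2 h1 hlam2.1 hn _
        fun x hx => ?_).trans (hlam2feas ▸ hslack)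
      rw [← hα1, mul_comm]
      exact hx.2.le
    · refine (sum_prodProb_ite_le_exp_neg_klDiv_right hs1 hs2 h2 hlam1.2 hn _
        fun x hx => ?_).trans (hlam1feas ▸ hslack)
      rw [← hβ1, mul_comm]
      exact hx.1.le
  refine ⟨fun P hP => by simpa only [histX_eq_ofFn] using hphase1 le_rfl P hP, fun P hP => ?_⟩
  have hP0 : ∀ a, 0 ≤ P a := by rcases hP with rfl | rfl; exacts [h1.1, h2.1]
  exact (lateProbHT_twoPhaseTest_le hP0 α1 β1 α K n hK).trans
    (hphase1 (Nat.le_mul_of_pos_left n hK) P hP)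

/-- For `γ ≤ D*`, the Phase-I continuation event of the two-phase test
has exponentially small probability with exponent `γ` under both hypotheses: for every
`δ > 0` there is `N(δ)` such that for all `n ≥ N(δ)` and `i = 1,2`,
`P_i( β1 < (1/n)·Σ_{j=1}^n log(P1(X_j)/P2(X_j)) < α1 ) ≤ e^{−(γ−δ)n}`; consequently the
stopping time `τ` of the two-phase test satisfies `P_i(τ > n) ≤ e^{−(γ−δ)n}`.
Here `λ1, λ2` are the maximizers defining `E1(γ)`, `E2(γ)`, which satisfy
`D(P^(λ1)‖P2) = γ` and `D(P^(λ2)‖P1) = γ`, and `α1 = D(P^(λ2)‖P2) − D(P^(λ2)‖P1)`,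
`β1 = D(P^(λ1)‖P2) − D(P^(λ1)‖P1)`. -/
theorem two_phase_test_phase_one_exponent
    {X : Type} [Fintype X]
    (P1 P2 : X → ℝ) (h1 : IsPMF P1) (h2 : IsPMF P2) (hne : P1 ≠ P2)
    (hs1 : ∀ x, 0 < P1 x) (hs2 : ∀ x, 0 < P2 x)
    (lamstar : ℝ) (hlamstar : lamstar ∈ Set.Icc (0:ℝ) 1)
    (hstar : klDiv (tilted P1 P2 lamstar) P1 = klDiv (tilted P1 P2 lamstar) P2)
    (γ : ℝ) (hγ0 : 0 ≤ γ) (hγ : γ ≤ klDiv (tilted P1 P2 lamstar) P1)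
    (lam1 : ℝ) (hlam1 : lam1 ∈ Set.Icc (0:ℝ) 1)
    (hlam1feas : klDiv (tilted P1 P2 lam1) P2 = γ)
    (hlam1max : klDiv (tilted P1 P2 lam1) P1 = E1exp P1 P2 γ)
    (lam2 : ℝ) (hlam2 : lam2 ∈ Set.Icc (0:ℝ) 1)
    (hlam2feas : klDiv (tilted P1 P2 lam2) P1 = γ)
    (hlam2max : klDiv (tilted P1 P2 lam2) P2 = E2exp P1 P2 γ)
    (K : ℕ) (hK : 1 ≤ K) (α : ℝ)
    (α1 β1 : ℝ)
    (hα1 : α1 = klDiv (tilted P1 P2 lam2) P2 - klDiv (tilted P1 P2 lam2) P1)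
    (hβ1 : β1 = klDiv (tilted P1 P2 lam1) P2 - klDiv (tilted P1 P2 lam1) P1) :
    ∀ δ > 0, ∃ N : ℕ, ∀ n : ℕ, n ≥ N →
      (∀ P : X → ℝ, (P = P1 ∨ P = P2) →
        (∑ x : Fin n → X, prodProb P x *
            (if β1 * n < llr P1 P2 (List.ofFn x) ∧ llr P1 P2 (List.ofFn x) < α1 * n
             then 1 else 0))
          ≤ Real.exp (-((γ - δ) * n))) ∧
      (∀ P : X → ℝ, (P = P1 ∨ P = P2) →
        lateProbHT P (twoPhaseTest P1 P2 α1 β1 α K n hK) n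
          ≤ Real.exp (-((γ - δ) * n))) :=
  two_phase_test_phase_one_exponent_general P1 P2 h1 h2 hs1 hs2 γ lam1 hlam1 hlam1feas lam2 hlam2
    hlam2feas K hK α α1 β1 hα1 hβ1

end
end
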